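/- Let X be a Hausdorff space and A = ⋃_{k=1}^m A_k where each A_k is a retract of X (via a retraction r_k : X → A_k) and a pointwise attractor of a finite IFS (X, W_k) with pointwise basin all of X. Set F = ⋃_{k=1}^m {w ∘ r_k : w ∈ W_k}. Then F(X) = A and A is a pointwise attractor of (X, F) with B_p(A, F) = X. -/

import Mathlib

open Filter Topology Set

/-- Convergence of a sequence of sets in the Vietoris topology: the sequence is
eventually in every subbasic Vietoris-open set containing the limit. -/
def VConv {X : Type*} [TopologicalSpace X] (A : ℕ → Set X) (L : Set X) : Prop :=
  (∀ U : Set X, IsOpen U → L ⊆ U → ∀ᶠ n in atTop, A n ⊆ U) ∧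
  (∀ U : Set X, IsOpen U → (L ∩ U).Nonempty → ∀ᶠ n in atTop, (A n ∩ U).Nonempty)

/-- Hutchinson (Barnsley–Hutchinson) operator of a family of maps. -/
def hutch {X : Type*} (F : Set (X → X)) (S : Set X) : Set X := ⋃ f ∈ F, f '' S

/-- Strict attractor of the IFS given by the family `F`. -/
def StrictAttractor {X : Type*} [TopologicalSpace X] (F : Set (X → X)) (A : Set X) : Prop :=
  A.Nonempty ∧ IsCompact A ∧ ∃ U : Set X, IsOpen U ∧ A ⊆ U ∧
    ∀ S : Set X, S.Nonempty → IsCompact S → S ⊆ U →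
      VConv (fun n => (hutch F)^[n] S) A

/-- Pointwise basin of a set for the IFS given by `F`. -/
def pBasin {X : Type*} [TopologicalSpace X] (F : Set (X → X)) (A : Set X) : Set X :=
  {x | VConv (fun n => (hutch F)^[n] {x}) A}

/-- Pointwise attractor of the IFS given by the family `F`. -/
def PtAttractor {X : Type*} [TopologicalSpace X] (F : Set (X → X)) (A : Set X) : Prop :=
  A.Nonempty ∧ IsCompact A ∧ A ⊆ interior (pBasin F A)

/-- Kuratowski lower limit. -/
def KLi {X : Type*} [TopologicalSpace X] (A : ℕ → Set X) : Set X :=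
  {x | ∀ U : Set X, IsOpen U → x ∈ U → ∀ᶠ n in atTop, (A n ∩ U).Nonempty}

/-- Kuratowski upper limit. -/
def KLs {X : Type*} [TopologicalSpace X] (A : ℕ → Set X) : Set X :=
  {x | ∀ U : Set X, IsOpen U → x ∈ U → ∃ᶠ n in atTop, (A n ∩ U).Nonempty}

/-! On subsets of `A k` the maps `w ∘ r k` act as `w`, so from the first step on the orbit of `x`
under `F` contains the orbit of `r k x` under `W k`, which converges to `A k`. Conversely `F` maps
everything into `⋃ k, A k`, because each `A k` is invariant under `W k`: the Hutchinson operator of a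
finite family of continuous maps is continuous for Vietoris convergence, and compact Vietoris limits
are unique in a Hausdorff space. The orbit of `x` under `F` is thus squeezed onto `⋃ k, A k`. -/

section

variable {X : Type*}

lemma hutch_mono (F : Set (X → X)) : Monotone (hutch F) :=
  fun _ _ h => iUnion₂_mono fun _ _ => image_mono h

lemma hutch_mono_left {F G : Set (X → X)} (h : F ⊆ G) : hutch F ≤ hutch G :=
  fun _ => biUnion_subset_biUnion_left h

lemma hutch_iUnion {ι : Sort*} (F : ι → Set (X → X)) (S : Set X) :
    hutch (⋃ i, F i) S = ⋃ i, hutch (F i) S :=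
  biUnion_iUnion F _

lemma hutch_image_comp (W : Set (X → X)) (r : X → X) (S : Set X) :
    hutch ((· ∘ r) '' W) S = hutch W (r '' S) := by
  simp only [hutch, biUnion_image, image_comp]

lemma isCompact_hutch [TopologicalSpace X] {W : Set (X → X)} (hW : W.Finite)
    (hWc : ∀ w ∈ W, Continuous w) {S : Set X} (hS : IsCompact S) : IsCompact (hutch W S) :=
  hW.isCompact_biUnion fun w hw => hS.image (hWc w hw)

lemma iterate_hutch_comp_of_subset {W : Set (X → X)} {r : X → X} {A : Set X}
    (hr : EqOn r id A) (hWA : hutch W A ⊆ A) {S : Set X} (hS : S ⊆ A) (n : ℕ) :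
    (hutch ((· ∘ r) '' W))^[n] S = (hutch W)^[n] S := by
  induction n generalizing S with
  | zero => rfl
  | succ n ih =>
    rw [Function.iterate_succ_apply, Function.iterate_succ_apply, hutch_image_comp,
      (hr.mono hS).image_eq_self, ih ((hutch_mono W hS).trans hWA)]

lemma iterate_succ_hutch_comp {W : Set (X → X)} {r : X → X} {A : Set X}
    (hr : EqOn r id A) (hWA : hutch W A ⊆ A) {S : Set X} (hS : r '' S ⊆ A) (n : ℕ) :
    (hutch ((· ∘ r) '' W))^[n + 1] S = (hutch W)^[n + 1] (r '' S) := by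
  rw [Function.iterate_succ_apply, Function.iterate_succ_apply, hutch_image_comp,
    iterate_hutch_comp_of_subset hr hWA ((hutch_mono W hS).trans hWA)]

section Vietoris

variable [TopologicalSpace X]

lemma vConv_comp_add_iff {S : ℕ → Set X} {L : Set X} (k : ℕ) :
    VConv (fun n => S (n + k)) L ↔ VConv S L := by
  have shift (p : ℕ → Prop) : (∀ᶠ n in atTop, p (n + k)) ↔ ∀ᶠ n in atTop, p n := by
    rw [← eventually_map, map_add_atTop_eq_nat]
  exact and_congr (forall₃_congr fun U _ _ => shift (S · ⊆ U))
    (forall₃_congr fun U _ _ => shift fun n => (S n ∩ U).Nonempty)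

lemma VConv.map_hutch {W : Set (X → X)} (hW : W.Finite) (hWc : ∀ w ∈ W, Continuous w)
    {S : ℕ → Set X} {L : Set X} (h : VConv S L) :
    VConv (fun n => hutch W (S n)) (hutch W L) := by
  refine ⟨fun U hU hLU => ?_, fun U hU ⟨_, hy, hyU⟩ => ?_⟩
  · have hpre : IsOpen (⋂ w ∈ W, w ⁻¹' U) :=
      hW.isOpen_biInter fun w hw => hU.preimage (hWc w hw)
    have hLpre : L ⊆ ⋂ w ∈ W, w ⁻¹' U := fun a ha =>
      mem_iInter₂.2 fun w hw => hLU (mem_biUnion hw (mem_image_of_mem w ha))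
    filter_upwards [h.1 _ hpre hLpre] with n hn
    exact iUnion₂_subset fun w hw => image_subset_iff.2 fun a ha => mem_iInter₂.1 (hn ha) w hw
  · obtain ⟨w, hw, a, ha, rfl⟩ := mem_iUnion₂.1 hy
    filter_upwards [h.2 _ (hU.preimage (hWc w hw)) ⟨a, ha, hyU⟩] with n ⟨b, hb, hbU⟩
    exact ⟨w b, mem_biUnion hw (mem_image_of_mem w hb), hbU⟩

lemma VConv.subset_of_isCompact [T2Space X] {S : ℕ → Set X} {L L' : Set X}
    (h : VConv S L) (h' : VConv S L') (hL : IsCompact L) : L' ⊆ L := by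
  intro y hy
  by_contra hyL
  obtain ⟨V, U, hV, hU, hyV, hLU, hVU⟩ :=
    SeparatedNhds.of_isCompact_isCompact isCompact_singleton hL (disjoint_singleton_left.2 hyL)
  obtain ⟨n, hn, z, hz, hzV⟩ := ((h.1 U hU hLU).and (h'.2 V hV ⟨y, hy, hyV rfl⟩)).exists
  exact hVU.le_bot ⟨hzV, hn hz⟩

lemma VConv.eq_of_isCompact [T2Space X] {S : ℕ → Set X} {L L' : Set X}
    (h : VConv S L) (h' : VConv S L') (hL : IsCompact L) (hL' : IsCompact L') : L = L' :=
  (h'.subset_of_isCompact h hL').antisymm (h.subset_of_isCompact h' hL)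

lemma VConv.iUnion {ι : Type*} [Finite ι] {S : ι → ℕ → Set X} {L : ι → Set X}
    (h : ∀ i, VConv (S i) (L i)) : VConv (fun n => ⋃ i, S i n) (⋃ i, L i) := by
  refine ⟨fun U hU hLU => ?_, fun U hU ⟨y, hy, hyU⟩ => ?_⟩
  · filter_upwards [eventually_all.2 fun i => (h i).1 U hU ((subset_iUnion L i).trans hLU)]
      with n hn
    exact iUnion_subset hn
  · obtain ⟨i, hi⟩ := mem_iUnion.1 hy
    filter_upwards [(h i).2 U hU ⟨y, hi, hyU⟩] with n ⟨z, hz, hzU⟩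
    exact ⟨z, mem_iUnion.2 ⟨i, hz⟩, hzU⟩

lemma VConv.of_subset {S T : ℕ → Set X} {L : Set X} (hS : VConv S L)
    (hST : ∀ᶠ n in atTop, S n ⊆ T n) (hTL : ∀ᶠ n in atTop, T n ⊆ L) : VConv T L :=
  ⟨fun _ _ hLU => hTL.mono fun _ hn => hn.trans hLU,
    fun U hU hLU => ((hS.2 U hU hLU).and hST).mono fun _ ⟨hn, hsub⟩ =>
      hn.mono (inter_subset_inter_left U hsub)⟩

lemma hutch_eq_of_vConv_iterate [T2Space X] {W : Set (X → X)} (hW : W.Finite)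
    (hWc : ∀ w ∈ W, Continuous w) {S A : Set X} (hA : IsCompact A)
    (h : VConv (fun n => (hutch W)^[n] S) A) : hutch W A = A := by
  have hsucc : VConv (fun n => hutch W ((hutch W)^[n] S)) A := by
    simpa only [Function.iterate_succ_apply'] using (vConv_comp_add_iff 1).2 h
  exact (h.map_hutch hW hWc).eq_of_isCompact hsucc (isCompact_hutch hW hWc hA) hA

end Vietoris

end

theorem union_of_retract_attractors_general {X : Type*} [TopologicalSpace X] [T2Space X]
    {m : ℕ} (hm : 1 ≤ m) (A : Fin m → Set X)
    (hAne : ∀ k, (A k).Nonempty) (hAc : ∀ k, IsCompact (A k))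
    (r : Fin m → X → X)
    (hrid : ∀ k, ∀ x ∈ A k, r k x = x) (hrto : ∀ k, ∀ x : X, r k x ∈ A k)
    (W : Fin m → Set (X → X)) (hWfin : ∀ k, (W k).Finite)
    (hWcont : ∀ k, ∀ w ∈ W k, Continuous w)
    (hWattr : ∀ k, ∀ x : X, VConv (fun n => (hutch (W k))^[n] {x}) (A k)) :
    hutch (⋃ k, (fun w : X → X => w ∘ r k) '' W k) Set.univ = ⋃ k, A k ∧
    (∀ x : X, VConv (fun n => (hutch (⋃ k, (fun w : X → X => w ∘ r k) '' W k))^[n] {x})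
      (⋃ k, A k)) ∧
    PtAttractor (⋃ k, (fun w : X → X => w ∘ r k) '' W k) (⋃ k, A k) := by
  set F := ⋃ k, (fun w : X → X => w ∘ r k) '' W k
  have hinv k : hutch (W k) (A k) = A k :=
    hutch_eq_of_vConv_iterate (hWfin k) (hWcont k) (hAc k) (hWattr k (hAne k).some)
  have himage : hutch F univ = ⋃ k, A k := by
    refine (hutch_iUnion _ _).trans (iUnion_congr fun k => ?_)
    have hrange : range (r k) = A k :=
      (range_subset_iff.2 (hrto k)).antisymm fun x hx => ⟨x, hrid k x hx⟩
    rw [hutch_image_comp, image_univ, hrange, hinv]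
  have hconv x : VConv (fun n => (hutch F)^[n] {x}) (⋃ k, A k) := by
    refine (vConv_comp_add_iff 1).1 (.of_subset
      (.iUnion fun k => (vConv_comp_add_iff 1).2 (hWattr k (r k x))) (.of_forall fun n => ?_)
      (.of_forall fun n => ?_))
    · refine iUnion_subset fun k => ?_
      rw [← image_singleton, ← iterate_succ_hutch_comp (hrid k) (hinv k).subset
        (by simpa using hrto k x)]
      exact (hutch_mono _).iterate_le_of_le
        (hutch_mono_left (subset_iUnion (fun j => (fun w : X → X => w ∘ r j) '' W j) k)) _ _
    · rw [Function.iterate_succ_apply', ← himage]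
      exact hutch_mono F (subset_univ _)
  refine ⟨himage, hconv, (hAne ⟨0, hm⟩).mono (subset_iUnion A _), isCompact_iUnion hAc, ?_⟩
  have hbasin : pBasin F (⋃ k, A k) = univ := eq_univ_of_forall hconv
  rw [hbasin, interior_univ]
  exact subset_univ _

theorem union_of_retract_attractors {X : Type*} [TopologicalSpace X] [T2Space X]
    {m : ℕ} (hm : 1 ≤ m) (A : Fin m → Set X)
    (hAne : ∀ k, (A k).Nonempty) (hAc : ∀ k, IsCompact (A k))
    (r : Fin m → X → X) (hrcont : ∀ k, Continuous (r k))
    (hrid : ∀ k, ∀ x ∈ A k, r k x = x) (hrto : ∀ k, ∀ x : X, r k x ∈ A k)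
    (W : Fin m → Set (X → X)) (hWfin : ∀ k, (W k).Finite)
    (hWcont : ∀ k, ∀ w ∈ W k, Continuous w)
    (hWattr : ∀ k, ∀ x : X, VConv (fun n => (hutch (W k))^[n] {x}) (A k)) :
    hutch (⋃ k, (fun w : X → X => w ∘ r k) '' W k) Set.univ = ⋃ k, A k ∧
    (∀ x : X, VConv (fun n => (hutch (⋃ k, (fun w : X → X => w ∘ r k) '' W k))^[n] {x})
      (⋃ k, A k)) ∧
    PtAttractor (⋃ k, (fun w : X → X => w ∘ r k) '' W k) (⋃ k, A k) :=
  union_of_retract_attractors_general hm A hAne hAc r hrid hrto W hWfin hWcont hWattr
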